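/- (Finitary Completeness) Let M be a closed term of Λ⊕^cbv. For every k ∈ ℕ there exists a tight typing derivation Π ⊳ ⊢_w M : 𝔞 such that ‖𝔞‖ = eval_k(M) and w ≥ etime_k(M). -/

import Mathlib

open scoped ENNReal

namespace CbV

/-! ### Terms of the probabilistic call-by-value λ-calculus `Λ⊕^cbv` -/

mutual
inductive Val : Type
  | var : ℕ → Val
  | lam : ℕ → Tm → Val
inductive Tm : Type
  | val : Val → Tm
  | app : Val → Val → Tm
  | choice : Tm → Tm → Tm
  | letin : ℕ → Tm → Tm → Tm
end

-- Substitution of a value for a variable.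
mutual
def substV : Val → ℕ → Val → Val
  | .var y, x, V => if y = x then V else .var y
  | .lam y M, x, V => if y = x then .lam y M else .lam y (substT M x V)
def substT : Tm → ℕ → Val → Tm
  | .val W, x, V => .val (substV W x V)
  | .app W U, x, V => .app (substV W x V) (substV U x V)
  | .choice M N, x, V => .choice (substT M x V) (substT N x V)
  | .letin y N M, x, V => .letin y (substT N x V) (if y = x then M else substT M x V)
end

mutual
def fvV : Val → Finset ℕ
  | .var x => {x}
  | .lam x M => fvT M \ {x}
def fvT : Tm → Finset ℕ
  | .val V => fvV V
  | .app V W => fvV V ∪ fvV W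
  | .choice M N => fvT M ∪ fvT N
  | .letin x N M => fvT N ∪ (fvT M \ {x})
end

def Tm.Closed (M : Tm) : Prop := fvT M = ∅
def Val.Closed (V : Val) : Prop := fvV V = ∅

def Tm.isVal : Tm → Bool
  | .val _ => true
  | _ => false

/-! ### Multidistributions and the operational semantics -/

/-- Multidistributions over terms, represented as finite multisets of scaled terms. -/
abbrev MDist := Multiset (ℚ × Tm)

def scaleM (q : ℚ) (m : MDist) : MDist := m.map fun p => (q * p.1, p.2)

/-- One-step reduction from terms to multidistributions. -/
inductive Step : Tm → MDist → Prop
  | beta (x : ℕ) (M : Tm) (V : Val) :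
      Step (.app (.lam x M) V) {(1, substT M x V)}
  | letval (x : ℕ) (V : Val) (M : Tm) :
      Step (.letin x (.val V) M) {(1, substT M x V)}
  | choice (M N : Tm) : Step (.choice M N) {(1/2, M), (1/2, N)}
  | letstep {N : Tm} {m : MDist} (x : ℕ) (M : Tm) :
      Step N m → Step (.letin x N M) (m.map fun p => (p.1, Tm.letin x p.2 M))

/-- Lifting of one-step reduction to multidistributions. -/
inductive Lift : MDist → MDist → Prop
  | value (V : Val) : Lift {(1, Tm.val V)} {(1, Tm.val V)}
  | single {M : Tm} {m : MDist} : Step M m → Lift {(1, M)} m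
  | multi (s : Multiset (ℚ × Tm × MDist)) :
      (∀ x ∈ s, Lift {(1, x.2.1)} x.2.2) →
      Lift (s.map fun x => (x.1, x.2.1)) ((s.map fun x => scaleM x.1 x.2.2).sum)

/-- Functional presentation of one-step reduction (values, and stuck open
terms, are kept unchanged); it agrees with `Step` on closed non-value terms. -/
def stepF : Tm → MDist
  | .val V => {(1, .val V)}
  | .app (.lam x M) W => {(1, substT M x W)}
  | .app (.var y) W => {(1, .app (.var y) W)}
  | .choice M N => {(1/2, M), (1/2, N)}
  | .letin x (.val V) M => {(1, substT M x V)}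
  | .letin x N M => (stepF N).map fun p => (p.1, Tm.letin x p.2 M)

def mstepF (m : MDist) : MDist := (m.map fun p => scaleM p.1 (stepF p.2)).sum

/-- The unique reduction sequence `[M] = 𝔪₀ ⇛ 𝔪₁ ⇛ …` of a closed term. -/
def traj (M : Tm) (k : ℕ) : MDist := mstepF^[k] {(1, M)}

/-- `‖𝔪‖𝒱`: the probability that `𝔪` is a value. -/
def normV (m : MDist) : ℚ := ((m.filter fun p => p.2.isVal = true).map Prod.fst).sum

/-- `eval_k(M)`: the probability that `M` terminates within `k` steps. -/
def evalP (k : ℕ) (M : Tm) : ℚ := normV (traj M k)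

/-- `ProbTerm(M) = sup_k eval_k(M)`. -/
noncomputable def ProbTerm (M : Tm) : ℝ := ⨆ k : ℕ, ((evalP k M : ℚ) : ℝ)

/-- `etime_n(M) = Σ_{k<n} (1 - eval_k(M))`. -/
def etime (n : ℕ) (M : Tm) : ℚ := ∑ k ∈ Finset.range n, (1 - evalP k M)

/-- `ETime(M) = Σ_{k≥0} (1 - eval_k(M)) ∈ [0,∞]`, the expected runtime. -/
noncomputable def ETime (M : Tm) : ℝ≥0∞ :=
  ∑' k : ℕ, ENNReal.ofReal ((1 : ℝ) - ((evalP k M : ℚ) : ℝ))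

/-! ### Non-idempotent monadic intersection types -/

/-- Arrow types `𝖠 ::= 𝒜 → 𝔞`, where `𝒜` is an intersection type
(a finite multiset of scaled arrow types, represented as a list) and `𝔞`
is a type distribution (a multidistribution of intersection types,
represented as a list). -/
inductive ATy : Type
  | arr : List (ℚ × ATy) → List (ℚ × List (ℚ × ATy)) → ATy

/-- Intersection types. -/
abbrev ITy := List (ℚ × ATy)
/-- Type distributions. -/
abbrev DTy := List (ℚ × ITy)

/-- A type of any of the three kinds. -/
inductive Ty : Type
  | arrow : ATy → Ty
  | inter : ITy → Ty
  | dist : DTy → Ty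

/-- Typing contexts. -/
abbrev Ctx := ℕ → ITy

def emptyCtx : Ctx := fun _ => []

def scaleL {α : Type} (q : ℚ) (l : List (ℚ × α)) : List (ℚ × α) :=
  l.map fun p => (q * p.1, p.2)

def ctxUnion (Γ Δ : Ctx) : Ctx := fun x => Γ x ++ Δ x

/-- A type distribution is tight if every intersection type in it is empty. -/
def Tight (a : DTy) : Prop := ∀ p ∈ a, p.2 = ([] : ITy)

/-- `‖𝔞‖`: the sum of the probabilities occurring in a type distribution. -/
def normD (a : DTy) : ℚ := (a.map Prod.fst).sum

/-- Typing derivations `Π ⊳ Γ ⊢_w M : σ`. -/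
inductive Deriv : Ctx → ℚ → Tm → Ty → Type
  | var (x : ℕ) (A : ITy) :
      Deriv (Function.update emptyCtx x A) 0 (.val (.var x)) (.inter A)
  | zero (M : Tm) : Deriv emptyCtx 0 M (.dist [])
  | lam {Γ : Ctx} {w : ℚ} {M : Tm} (x : ℕ) (b : DTy) :
      Deriv Γ w M (.dist b) →
      Deriv (Function.update Γ x []) (w + 1) (.val (.lam x M)) (.arrow (.arr (Γ x) b))
  | app {Γ Δ : Ctx} {w v : ℚ} {V W : Val} {A : ITy} {b : DTy} :
      Deriv Γ w (.val V) (.inter [(1, .arr A b)]) →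
      Deriv Δ v (.val W) (.inter A) →
      Deriv (ctxUnion Γ Δ) (w + v) (.app V W) (.dist b)
  | choice {Γ Δ : Ctx} {w v : ℚ} {M N : Tm} {a b : DTy} :
      Deriv Γ w M (.dist a) → Deriv Δ v N (.dist b) →
      Deriv (ctxUnion (fun y => scaleL (1/2) (Γ y)) (fun y => scaleL (1/2) (Δ y)))
        (w / 2 + v / 2 + 1) (.choice M N)
        (.dist (scaleL (1/2) a ++ scaleL (1/2) b))
  | letin {Γ : Ctx} {v : ℚ} (x : ℕ) {N M : Tm}
      (K : List (ℚ × ITy × Ctx × ℚ × DTy)) :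
      (∀ k ∈ K, k.2.2.1 x = []) →
      ((i : Fin K.length) →
        Deriv (Function.update (K.get i).2.2.1 x (K.get i).2.1)
          (K.get i).2.2.2.1 M (.dist (K.get i).2.2.2.2)) →
      Deriv Γ v N (.dist (K.map fun k => (k.1, k.2.1))) →
      Deriv (ctxUnion Γ (fun y => (K.map fun k => scaleL k.1 (k.2.2.1 y)).flatten))
        ((K.map fun k => k.1 * k.2.2.2.1).sum + v + 1)
        (.letin x N M)
        (.dist (K.map fun k => scaleL k.1 k.2.2.2.2).flatten)
  | tval {Γ : Ctx} {w : ℚ} {V : Val} {A : ITy} :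
      Deriv Γ w (.val V) (.inter A) → Deriv Γ w (.val V) (.dist [(1, A)])
  | bang {V : Val} (I : List (ℚ × Ctx × ℚ × ATy)) :
      (∀ k ∈ I, 0 < k.1 ∧ k.1 ≤ 1) →
      ((i : Fin I.length) →
        Deriv (I.get i).2.1 (I.get i).2.2.1 (.val V) (.arrow (I.get i).2.2.2)) →
      Deriv (fun y => (I.map fun k => scaleL k.1 (k.2.1 y)).flatten)
        ((I.map fun k => k.1 * k.2.2.1).sum) (.val V)
        (.inter (I.map fun k => (k.1, k.2.2.2)))

/-- Size of a derivation: the number of rules, excluding `!` and `Val`. -/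
def Deriv.size : ∀ {Γ : Ctx} {w : ℚ} {M : Tm} {τ : Ty}, Deriv Γ w M τ → ℕ
  | _, _, _, _, .var _ _ => 1
  | _, _, _, _, .zero _ => 1
  | _, _, _, _, .lam _ _ d => d.size + 1
  | _, _, _, _, .app d e => d.size + e.size + 1
  | _, _, _, _, .choice d e => d.size + e.size + 1
  | _, _, _, _, .letin _ _ _ f d => d.size + (List.ofFn fun i => (f i).size).sum + 1
  | _, _, _, _, .tval d => d.size
  | _, _, _, _, .bang _ _ f => (List.ofFn fun i => (f i).size).sum

/-!
By induction on `k`. A value `V` gets `⟨1·[]⟩` from an empty `!`, and at `k = 0` a non-value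
gets `𝟘`. At `k + 1` a non-value `M` reduces to `[pᵢ Mᵢ]`, with
`eval_{k+1}(M) = Σ pᵢ eval_k(Mᵢ)` and `etime_{k+1}(M) = 1 + Σ pᵢ etime_k(Mᵢ)`, so it suffices to
glue the tight derivations `⊢_{wᵢ} Mᵢ : 𝔞ᵢ` given by induction into one derivation
`⊢_w M : ⊎ pᵢ𝔞ᵢ` with `w ≥ 1 + Σ pᵢwᵢ` (weighted subject expansion). For `⊕` this is the `⊕`
rule; for a `let` around a reducing term, invert the `let` rule in each premise, expand the
bound term, and regroup. For `(λx.M)V` and `let x = V in M` one needs anti-substitution: a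
derivation of `M{V/x}` splits into derivations of `x : 𝒜 ⊢ M` and `⊢ V : 𝒜` whose weights add
up. This works because a closed value is an abstraction, typed by `!`, and `!`-derivations of the
same abstraction can be concatenated and rescaled.
-/

theorem Tm.eq_val_or_isVal_eq_false : ∀ N : Tm, (∃ V, N = .val V) ∨ N.isVal = false
  | .val V => .inl ⟨V, rfl⟩
  | .app .. | .choice .. | .letin .. => .inr rfl

def stepL : Tm → List (ℚ × Tm)
  | .val V => [(1, .val V)]
  | .app (.lam x M) W => [(1, substT M x W)]
  | .app (.var y) W => [(1, .app (.var y) W)]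
  | .choice M N => [(1/2, M), (1/2, N)]
  | .letin x (.val V) M => [(1, substT M x V)]
  | .letin x N M => (stepL N).map fun p => (p.1, Tm.letin x p.2 M)

theorem stepL_letin {x : ℕ} {N : Tm} (M : Tm) (hN : N.isVal = false) :
    stepL (.letin x N M) = (stepL N).map fun p => (p.1, Tm.letin x p.2 M) := by
  cases N <;> first | rfl | simp [Tm.isVal] at hN

theorem stepF_letin {x : ℕ} {N : Tm} (M : Tm) (hN : N.isVal = false) :
    stepF (.letin x N M) = (stepF N).map fun p => (p.1, Tm.letin x p.2 M) := by
  cases N <;> first | rfl | simp [Tm.isVal] at hN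

theorem coe_stepL : ∀ M : Tm, (stepL M : MDist) = stepF M
  | .letin x N M => by
    rcases N.eq_val_or_isVal_eq_false with ⟨V, rfl⟩ | hN
    · rfl
    · rw [stepL_letin M hN, stepF_letin M hN, ← coe_stepL N, Multiset.map_coe]
  | .val _ | .app (.lam ..) _ | .app (.var _) _ | .choice .. => rfl

theorem sum_map_fst_stepL : ∀ M : Tm, ((stepL M).map Prod.fst).sum = 1
  | .letin x N M => by
    rcases N.eq_val_or_isVal_eq_false with ⟨V, rfl⟩ | hN
    · simp [stepL]
    · simpa [stepL_letin M hN, Function.comp_def] using sum_map_fst_stepL N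
  | .val _ | .app (.lam ..) _ | .app (.var _) _ => by simp [stepL]
  | .choice .. => by norm_num [stepL]

theorem mem_stepL_prob : ∀ {M : Tm}, ∀ p ∈ stepL M, 0 < p.1 ∧ p.1 ≤ 1
  | .letin x N M => by
    rcases N.eq_val_or_isVal_eq_false with ⟨V, rfl⟩ | hN
    · simp [stepL]
    · rw [stepL_letin M hN]
      intro q hq
      obtain ⟨p, hp, rfl⟩ := List.mem_map.mp hq
      exact mem_stepL_prob p hp
  | .val _ | .app (.lam ..) _ | .app (.var _) _ => by simp [stepL]
  | .choice .. => by norm_num [stepL]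

theorem scaleM_add (q : ℚ) (m n : MDist) : scaleM q (m + n) = scaleM q m + scaleM q n := by
  simp [scaleM]

theorem mstepF_add (m n : MDist) : mstepF (m + n) = mstepF m + mstepF n := by
  simp [mstepF]

theorem commute_mstepF_scaleM (q : ℚ) : Function.Commute mstepF (scaleM q) := by
  intro m
  induction m using Multiset.induction with
  | empty => simp [mstepF, scaleM]
  | cons p m ih =>
    rw [← Multiset.singleton_add, scaleM_add, mstepF_add, mstepF_add, ih, scaleM_add]
    simp [mstepF, scaleM, mul_assoc]

theorem iterate_mstepF_add (k : ℕ) (m n : MDist) :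
    mstepF^[k] (m + n) = mstepF^[k] m + mstepF^[k] n := by
  induction k generalizing m n with
  | zero => rfl
  | succ k ih => simp only [Function.iterate_succ_apply, mstepF_add, ih]

theorem normV_add (m n : MDist) : normV (m + n) = normV m + normV n := by
  simp [normV, Multiset.filter_add]

theorem normV_scaleM (q : ℚ) (m : MDist) : normV (scaleM q m) = q * normV m := by
  simp [normV, scaleM, Multiset.filter_map, Multiset.sum_map_mul_left]

theorem normV_iterate_mstepF (k : ℕ) (m : MDist) :
    normV (mstepF^[k] m) = (m.map fun p => p.1 * evalP k p.2).sum := by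
  induction m using Multiset.induction with
  | empty => simp [Function.iterate_fixed (show mstepF 0 = 0 from rfl), normV]
  | cons p m ih =>
    have hp : mstepF^[k] {p} = scaleM p.1 (traj p.2 k) := by
      rw [show ({p} : MDist) = scaleM p.1 {(1, p.2)} by simp [scaleM],
        (commute_mstepF_scaleM p.1).iterate_left k]
      rfl
    rw [← Multiset.singleton_add, iterate_mstepF_add, normV_add, ih, hp, normV_scaleM]
    simp [evalP]

theorem evalP_succ (k : ℕ) (M : Tm) :
    evalP (k + 1) M = ((stepL M).map fun p => p.1 * evalP k p.2).sum := by
  have h : mstepF {(1, M)} = stepF M := by simp [mstepF, scaleM]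
  rw [evalP, traj, Function.iterate_succ_apply, h, ← coe_stepL, normV_iterate_mstepF,
    Multiset.map_coe, Multiset.sum_coe]

theorem evalP_val (k : ℕ) (V : Val) : evalP k (.val V) = 1 := by
  have h : mstepF {(1, .val V)} = {(1, .val V)} := by simp [mstepF, scaleM, stepF]
  simp [evalP, traj, Function.iterate_fixed h, normV, Multiset.filter_singleton, Tm.isVal]

theorem evalP_zero {M : Tm} (hM : M.isVal = false) : evalP 0 M = 0 := by
  simp [evalP, traj, normV, Multiset.filter_singleton, hM]

theorem etime_val (k : ℕ) (V : Val) : etime k (.val V) = 0 := by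
  simp [etime, evalP_val]

theorem etime_succ (k : ℕ) {M : Tm} (hM : M.isVal = false) :
    etime (k + 1) M = 1 + ((stepL M).map fun p => p.1 * etime k p.2).sum := by
  induction k with
  | zero => simp [etime, evalP_zero hM]
  | succ k ih =>
    have hmass : ((stepL M).map fun p => p.1 * (1 - evalP k p.2)).sum
        + ((stepL M).map fun p => p.1 * evalP k p.2).sum = 1 := by
      rw [← List.sum_map_add]
      simpa [mul_sub] using sum_map_fst_stepL M
    have hdefect : 1 - evalP (k + 1) M
        = ((stepL M).map fun p => p.1 * (1 - evalP k p.2)).sum := by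
      rw [evalP_succ]
      linarith
    rw [etime, Finset.sum_range_succ, ← etime, ih, hdefect, add_assoc, ← List.sum_map_add]
    simp only [etime, Finset.sum_range_succ, mul_add]

mutual
theorem fvV_substV_subset : ∀ (V : Val) (x : ℕ) (W : Val), fvV (substV V x W) ⊆ fvV V \ {x} ∪ fvV W
  | .var y, x, W => by by_cases h : y = x <;> simp [substV, fvV, h]
  | .lam y M, x, W => by
    have := fvT_substT_subset M x W
    by_cases h : y = x <;> simp only [Finset.subset_iff, substV, fvV, h, if_true, if_false,
      Finset.mem_union, Finset.mem_sdiff, Finset.mem_singleton] at this ⊢ <;> grind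

theorem fvT_substT_subset : ∀ (M : Tm) (x : ℕ) (W : Val), fvT (substT M x W) ⊆ fvT M \ {x} ∪ fvV W
  | .val V, x, W => fvV_substV_subset V x W
  | .app V U, x, W => by
    have := fvV_substV_subset V x W
    have := fvV_substV_subset U x W
    simp only [Finset.subset_iff, substT, fvT, Finset.mem_union, Finset.mem_sdiff,
      Finset.mem_singleton] at *
    grind
  | .choice M N, x, W => by
    have := fvT_substT_subset M x W
    have := fvT_substT_subset N x W
    simp only [Finset.subset_iff, substT, fvT, Finset.mem_union, Finset.mem_sdiff,
      Finset.mem_singleton] at *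
    grind
  | .letin y N M, x, W => by
    have := fvT_substT_subset N x W
    have := fvT_substT_subset M x W
    by_cases h : y = x <;> simp only [Finset.subset_iff, substT, fvT, h, if_true, if_false,
      Finset.mem_union, Finset.mem_sdiff, Finset.mem_singleton] at * <;> grind
end

theorem closed_substT {M : Tm} {x : ℕ} {W : Val} (hM : fvT M ⊆ {x}) (hW : W.Closed) :
    (substT M x W).Closed := by
  have h := fvT_substT_subset M x W
  rw [hW, Finset.sdiff_eq_empty_iff_subset.mpr hM] at h
  exact Finset.subset_empty.mp h

theorem Tm.Closed.letin {x : ℕ} {N M : Tm} (h : (Tm.letin x N M).Closed) :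
    N.Closed ∧ fvT M ⊆ {x} := by
  simpa [Tm.Closed, fvT, Finset.sdiff_eq_empty_iff_subset] using h

theorem closed_of_mem_stepL : ∀ {M : Tm}, M.Closed → ∀ p ∈ stepL M, p.2.Closed
  | .letin x N M, hC, p, hp => by
    obtain ⟨hN, hM⟩ := hC.letin
    rcases N.eq_val_or_isVal_eq_false with ⟨V, rfl⟩ | hNv
    · simp only [stepL, List.mem_singleton] at hp
      exact hp ▸ closed_substT hM hN
    · rw [stepL_letin M hNv] at hp
      obtain ⟨q, hq, rfl⟩ := List.mem_map.mp hp
      simpa [Tm.Closed, fvT, Finset.sdiff_eq_empty_iff_subset, hM]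
        using closed_of_mem_stepL hN q hq
  | .app (.lam x M) W, hC, p, hp => by
    simp only [Tm.Closed, fvT, fvV, Finset.union_eq_empty, Finset.sdiff_eq_empty_iff_subset]
      at hC
    simp only [stepL, List.mem_singleton] at hp
    exact hp ▸ closed_substT hC.1 hC.2
  | .choice M N, hC, p, hp => by
    simp only [Tm.Closed, fvT, Finset.union_eq_empty] at hC
    simp only [stepL, List.mem_cons, List.not_mem_nil, or_false] at hp
    rcases hp with rfl | rfl
    exacts [hC.1, hC.2]
  | .val _, hC, p, hp | .app (.var _) _, hC, p, hp => by
    simp only [stepL, List.mem_singleton] at hp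
    exact hp ▸ hC

/-- A `Prop`-valued copy of `Deriv` with membership-indexed premises, so that derivations can be
built by induction and chosen pointwise. Its `let` rule also asks the weights `pₖ` to lie in
`(0,1]`, as `!` does: anti-substitution rescales value derivations by these weights. -/
inductive GDeriv : Ctx → ℚ → Tm → Ty → Prop
  | var (x : ℕ) (A : ITy) :
      GDeriv (Function.update emptyCtx x A) 0 (.val (.var x)) (.inter A)
  | zero (M : Tm) : GDeriv emptyCtx 0 M (.dist [])
  | lam {Γ : Ctx} {w : ℚ} {M : Tm} (x : ℕ) (b : DTy) :
      GDeriv Γ w M (.dist b) →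
      GDeriv (Function.update Γ x []) (w + 1) (.val (.lam x M)) (.arrow (.arr (Γ x) b))
  | app {Γ Δ : Ctx} {w v : ℚ} {V W : Val} {A : ITy} {b : DTy} :
      GDeriv Γ w (.val V) (.inter [(1, .arr A b)]) →
      GDeriv Δ v (.val W) (.inter A) →
      GDeriv (ctxUnion Γ Δ) (w + v) (.app V W) (.dist b)
  | choice {Γ Δ : Ctx} {w v : ℚ} {M N : Tm} {a b : DTy} :
      GDeriv Γ w M (.dist a) → GDeriv Δ v N (.dist b) →
      GDeriv (ctxUnion (fun y => scaleL (1/2) (Γ y)) (fun y => scaleL (1/2) (Δ y)))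
        (w / 2 + v / 2 + 1) (.choice M N)
        (.dist (scaleL (1/2) a ++ scaleL (1/2) b))
  | letin {Γ : Ctx} {v : ℚ} (x : ℕ) {N M : Tm}
      (K : List (ℚ × ITy × Ctx × ℚ × DTy)) :
      (∀ k ∈ K, k.2.2.1 x = [] ∧ 0 < k.1 ∧ k.1 ≤ 1) →
      (∀ k ∈ K, GDeriv (Function.update k.2.2.1 x k.2.1) k.2.2.2.1 M (.dist k.2.2.2.2)) →
      GDeriv Γ v N (.dist (K.map fun k => (k.1, k.2.1))) →
      GDeriv (ctxUnion Γ (fun y => (K.map fun k => scaleL k.1 (k.2.2.1 y)).flatten))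
        ((K.map fun k => k.1 * k.2.2.2.1).sum + v + 1)
        (.letin x N M)
        (.dist (K.map fun k => scaleL k.1 k.2.2.2.2).flatten)
  | tval {Γ : Ctx} {w : ℚ} {V : Val} {A : ITy} :
      GDeriv Γ w (.val V) (.inter A) → GDeriv Γ w (.val V) (.dist [(1, A)])
  | bang {V : Val} (I : List (ℚ × Ctx × ℚ × ATy)) :
      (∀ k ∈ I, 0 < k.1 ∧ k.1 ≤ 1) →
      (∀ k ∈ I, GDeriv k.2.1 k.2.2.1 (.val V) (.arrow k.2.2.2)) →
      GDeriv (fun y => (I.map fun k => scaleL k.1 (k.2.1 y)).flatten)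
        ((I.map fun k => k.1 * k.2.2.1).sum) (.val V)
        (.inter (I.map fun k => (k.1, k.2.2.2)))

namespace GDeriv

variable {Γ Γ' : Ctx} {w w' : ℚ} {M : Tm} {τ τ' : Ty}

theorem congr (h : GDeriv Γ w M τ) (hΓ : Γ = Γ') (hw : w = w') (hτ : τ = τ') :
    GDeriv Γ' w' M τ' :=
  hΓ ▸ hw ▸ hτ ▸ h

theorem nonempty_deriv (h : GDeriv Γ w M τ) : Nonempty (Deriv Γ w M τ) := by
  induction h with
  | var x A => exact ⟨.var x A⟩
  | zero M => exact ⟨.zero M⟩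
  | lam x b _ ih => exact ⟨.lam x b ih.some⟩
  | app _ _ ih₁ ih₂ => exact ⟨.app ih₁.some ih₂.some⟩
  | choice _ _ ih₁ ih₂ => exact ⟨.choice ih₁.some ih₂.some⟩
  | letin x K hK _ _ ihM ihN =>
    exact ⟨.letin x K (fun k hk => (hK k hk).1) (fun i => (ihM _ (List.get_mem K i)).some)
      ihN.some⟩
  | tval _ ih => exact ⟨.tval ih.some⟩
  | bang I hI _ ih => exact ⟨.bang I hI fun i => (ih _ (List.get_mem I i)).some⟩

theorem ctx_eq_nil (h : GDeriv Γ w M τ) {y : ℕ} (hy : y ∉ fvT M) : Γ y = [] := by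
  induction h with
  | var x A =>
    simp_all [fvT, fvV, emptyCtx]
  | zero => rfl
  | lam x b _ ih =>
    rcases eq_or_ne y x with rfl | hne
    · simp
    · simp_all [fvT, fvV]
  | app _ _ ih₁ ih₂ | choice _ _ ih₁ ih₂ =>
    simp_all [fvT, ctxUnion, scaleL]
  | letin x K hK _ _ ihM ihN =>
    simp only [fvT, Finset.mem_union, Finset.mem_sdiff, Finset.mem_singleton, not_or,
      not_and_or, not_not] at hy
    simp only [ctxUnion, ihN hy.1, List.nil_append, List.flatten_eq_nil_iff, List.mem_map]
    rintro _ ⟨k, hk, rfl⟩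
    rcases eq_or_ne y x with rfl | hne
    · simp [(hK k hk).1, scaleL]
    · have := ihM k hk (hy.2.resolve_right hne)
      simp_all [scaleL]
  | tval _ ih => exact ih hy
  | bang I _ _ ih =>
    simp only [List.flatten_eq_nil_iff, List.mem_map]
    rintro _ ⟨k, hk, rfl⟩
    simp [ih k hk hy, scaleL]

theorem ctx_eq_empty {V : Val} (hV : V.Closed) (h : GDeriv Γ w (.val V) τ) : Γ = emptyCtx :=
  funext fun _ => h.ctx_eq_nil (by simp [fvT, show fvV V = ∅ from hV])

end GDeriv

theorem Val.Closed.eq_lam {V : Val} (hV : V.Closed) : ∃ z B, V = .lam z B := by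
  cases V with
  | var x => simp [Val.Closed, fvV] at hV
  | lam z B => exact ⟨z, B, rfl⟩

@[simp]
theorem scaleL_eq_nil_iff {α : Type} {q : ℚ} {l : List (ℚ × α)} : scaleL q l = [] ↔ l = [] :=
  List.map_eq_nil_iff

@[simp]
theorem scaleL_one {α : Type} (l : List (ℚ × α)) : scaleL 1 l = l := by
  simp [scaleL]

theorem scaleL_scaleL {α : Type} (q r : ℚ) (l : List (ℚ × α)) :
    scaleL q (scaleL r l) = scaleL (q * r) l := by
  simp [scaleL, Function.comp_def, mul_assoc]

theorem scaleL_flatten {α : Type} (q : ℚ) (L : List (List (ℚ × α))) :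
    scaleL q L.flatten = (L.map (scaleL q)).flatten :=
  List.map_flatten

theorem sum_map_mul_add_sum_map_mul {ι : Type} (L : List ι) {q u₁ u₂ u : ι → ℚ}
    (h : ∀ i ∈ L, u₁ i + u₂ i = u i) :
    (L.map fun i => q i * u₁ i).sum + (L.map fun i => q i * u₂ i).sum
      = (L.map fun i => q i * u i).sum := by
  rw [← List.sum_map_add]
  congr 1
  refine List.map_congr_left fun i hi => ?_
  rw [← h i hi, mul_add]

namespace GDeriv

variable {Γ Γ₁ Γ₂ : Ctx} {w w₁ w₂ : ℚ} {z : ℕ} {B : Tm} {W : Val} {A A₁ A₂ : ITy}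

theorem inter_nil (V : Val) : GDeriv emptyCtx 0 (.val V) (.inter []) :=
  .bang [] (by simp) (by simp)

theorem exists_bang_of_inter_lam (h : GDeriv Γ w (.val (.lam z B)) (.inter A)) :
    ∃ I : List (ℚ × Ctx × ℚ × ATy), (∀ k ∈ I, 0 < k.1 ∧ k.1 ≤ 1) ∧
      (∀ k ∈ I, GDeriv k.2.1 k.2.2.1 (.val (.lam z B)) (.arrow k.2.2.2)) ∧
      Γ = (fun y => (I.map fun k => scaleL k.1 (k.2.1 y)).flatten) ∧
      w = (I.map fun k => k.1 * k.2.2.1).sum ∧ A = I.map fun k => (k.1, k.2.2.2) := by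
  cases h with
  | bang I hI hd => exact ⟨I, hI, hd, rfl, rfl, rfl⟩

theorem inter_append_lam (h₁ : GDeriv Γ₁ w₁ (.val (.lam z B)) (.inter A₁))
    (h₂ : GDeriv Γ₂ w₂ (.val (.lam z B)) (.inter A₂)) :
    GDeriv (ctxUnion Γ₁ Γ₂) (w₁ + w₂) (.val (.lam z B)) (.inter (A₁ ++ A₂)) := by
  obtain ⟨I₁, hI₁, hd₁, rfl, rfl, rfl⟩ := exists_bang_of_inter_lam h₁
  obtain ⟨I₂, hI₂, hd₂, rfl, rfl, rfl⟩ := exists_bang_of_inter_lam h₂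
  refine (bang (I₁ ++ I₂) ?_ ?_).congr ?_ ?_ ?_
  · exact List.forall_mem_append.mpr ⟨hI₁, hI₂⟩
  · exact List.forall_mem_append.mpr ⟨hd₁, hd₂⟩
  · funext y; simp [ctxUnion]
  · simp
  · simp

theorem inter_scaleL_lam {q : ℚ} (hq : 0 < q) (hq1 : q ≤ 1)
    (h : GDeriv Γ w (.val (.lam z B)) (.inter A)) :
    GDeriv (fun y => scaleL q (Γ y)) (q * w) (.val (.lam z B)) (.inter (scaleL q A)) := by
  obtain ⟨I, hI, hd, rfl, rfl, rfl⟩ := exists_bang_of_inter_lam h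
  refine (bang (I.map fun k => (q * k.1, k.2)) ?_ ?_).congr ?_ ?_ ?_
  · simp only [List.forall_mem_map]
    intro k hk
    have := hI k hk
    constructor <;> nlinarith
  · exact List.forall_mem_map.mpr hd
  · funext y; simp [scaleL_flatten, scaleL_scaleL, Function.comp_def]
  · simp [Function.comp_def, ← List.sum_map_mul_left, mul_assoc]
  · simp [scaleL]

theorem inter_append (hW : W.Closed) (h₁ : GDeriv emptyCtx w₁ (.val W) (.inter A₁))
    (h₂ : GDeriv emptyCtx w₂ (.val W) (.inter A₂)) :
    GDeriv emptyCtx (w₁ + w₂) (.val W) (.inter (A₁ ++ A₂)) := by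
  obtain ⟨z, B, rfl⟩ := hW.eq_lam
  exact inter_append_lam h₁ h₂

theorem inter_scaleL (hW : W.Closed) {q : ℚ} (hq : 0 < q) (hq1 : q ≤ 1)
    (h : GDeriv emptyCtx w (.val W) (.inter A)) :
    GDeriv emptyCtx (q * w) (.val W) (.inter (scaleL q A)) := by
  obtain ⟨z, B, rfl⟩ := hW.eq_lam
  exact inter_scaleL_lam hq hq1 h

theorem inter_flatten (hW : W.Closed) {ι : Type} (L : List ι) (q u : ι → ℚ) (C : ι → ITy)
    (hq : ∀ i ∈ L, 0 < q i ∧ q i ≤ 1) (h : ∀ i ∈ L, GDeriv emptyCtx (u i) (.val W) (.inter (C i))) :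
    GDeriv emptyCtx (L.map fun i => q i * u i).sum (.val W)
      (.inter (L.map fun i => scaleL (q i) (C i)).flatten) := by
  induction L with
  | nil => exact inter_nil W
  | cons i L ih =>
    simp only [List.forall_mem_cons] at hq h
    simpa using inter_append hW (inter_scaleL hW hq.1.1 hq.1.2 h.1) (ih hq.2 h.2)

end GDeriv

/-- The conclusion of anti-substitution for a derivation of `Γ ⊢_w N{W/x} : τ`. -/
def AntiSubst (x : ℕ) (W : Val) (Γ : Ctx) (w : ℚ) (N : Tm) (τ : Ty) : Prop :=
  ∃ A w₁ w₂, GDeriv (Function.update Γ x A) w₁ N τ ∧ GDeriv emptyCtx w₂ (.val W) (.inter A) ∧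
    w₁ + w₂ = w

namespace AntiSubst

variable {x z : ℕ} {W V U : Val} {Γ Δ : Ctx} {w v : ℚ} {M N B : Tm} {τ : Ty} {A : ITy}
  {a b : DTy}

theorem of_gderiv (hx : Γ x = []) (h : GDeriv Γ w N τ) : AntiSubst x W Γ w N τ :=
  ⟨[], w, 0, h.congr (Function.update_eq_self_iff.mpr hx.symm).symm rfl rfl, .inter_nil W,
    add_zero w⟩

theorem var_self (hW : W.Closed) (h : GDeriv Γ w (.val W) τ) (hτ : ∀ A, τ ≠ .arrow A) :
    AntiSubst x W Γ w (.val (.var x)) τ := by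
  match τ, h with
  | .inter A, h =>
    obtain rfl := h.ctx_eq_empty hW
    exact ⟨A, 0, w, .var x A, h, zero_add w⟩
  | .dist _, .zero _ => exact of_gderiv rfl (.zero _)
  | .dist _, .tval h =>
    obtain rfl := h.ctx_eq_empty hW
    exact ⟨_, 0, w, .tval (.var x _), h, zero_add w⟩
  | .arrow A, _ => exact absurd rfl (hτ A)

theorem lam (hzx : z ≠ x) (h : AntiSubst x W Γ w B (.dist b)) :
    AntiSubst x W (Function.update Γ z []) (w + 1) (.val (.lam z B)) (.arrow (.arr (Γ z) b)) := by
  obtain ⟨A, w₁, w₂, h₁, h₂, hw⟩ := h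
  refine ⟨A, w₁ + 1, w₂, (GDeriv.lam z b h₁).congr ?_ rfl ?_, h₂, by linarith⟩
  · rw [Function.update_comm hzx]
  · rw [Function.update_of_ne hzx]

theorem app (hW : W.Closed) (hV : AntiSubst x W Γ w (.val V) (.inter [(1, .arr A b)]))
    (hU : AntiSubst x W Δ v (.val U) (.inter A)) :
    AntiSubst x W (ctxUnion Γ Δ) (w + v) (.app V U) (.dist b) := by
  obtain ⟨A₁, w₁, w₂, hV₁, hV₂, hw⟩ := hV
  obtain ⟨A₂, v₁, v₂, hU₁, hU₂, hv⟩ := hU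
  refine ⟨A₁ ++ A₂, w₁ + v₁, w₂ + v₂, (GDeriv.app hV₁ hU₁).congr ?_ rfl rfl,
    .inter_append hW hV₂ hU₂, by linarith⟩
  funext y
  by_cases hy : y = x <;> simp [ctxUnion, hy]

theorem choice (hW : W.Closed) (hM : AntiSubst x W Γ w M (.dist a))
    (hN : AntiSubst x W Δ v N (.dist b)) :
    AntiSubst x W (ctxUnion (fun y => scaleL (1/2) (Γ y)) (fun y => scaleL (1/2) (Δ y)))
      (w / 2 + v / 2 + 1) (.choice M N) (.dist (scaleL (1/2) a ++ scaleL (1/2) b)) := by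
  obtain ⟨A₁, w₁, w₂, hM₁, hM₂, hw⟩ := hM
  obtain ⟨A₂, v₁, v₂, hN₁, hN₂, hv⟩ := hN
  refine ⟨scaleL (1/2) A₁ ++ scaleL (1/2) A₂, w₁ / 2 + v₁ / 2 + 1, 1/2 * w₂ + 1/2 * v₂,
    (GDeriv.choice hM₁ hN₁).congr ?_ rfl rfl,
    .inter_append hW (.inter_scaleL hW (by norm_num) (by norm_num) hM₂)
      (.inter_scaleL hW (by norm_num) (by norm_num) hN₂), by linarith⟩
  funext y
  by_cases hy : y = x <;> simp [ctxUnion, hy]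

theorem tval (h : AntiSubst x W Γ w (.val V) (.inter A)) :
    AntiSubst x W Γ w (.val V) (.dist [(1, A)]) := by
  obtain ⟨A', w₁, w₂, h₁, h₂, hw⟩ := h
  exact ⟨A', w₁, w₂, .tval h₁, h₂, hw⟩

variable (K : List (ℚ × ITy × Ctx × ℚ × DTy))

theorem letin_self (hK : ∀ k ∈ K, k.2.2.1 x = [] ∧ 0 < k.1 ∧ k.1 ≤ 1)
    (hM : ∀ k ∈ K, GDeriv (Function.update k.2.2.1 x k.2.1) k.2.2.2.1 M (.dist k.2.2.2.2))
    (hN : AntiSubst x W Γ v N (.dist (K.map fun k => (k.1, k.2.1)))) :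
    AntiSubst x W (ctxUnion Γ (fun y => (K.map fun k => scaleL k.1 (k.2.2.1 y)).flatten))
      ((K.map fun k => k.1 * k.2.2.2.1).sum + v + 1) (.letin x N M)
      (.dist (K.map fun k => scaleL k.1 k.2.2.2.2).flatten) := by
  obtain ⟨A, v₁, v₂, hN₁, hN₂, hv⟩ := hN
  refine ⟨A, _, v₂, (GDeriv.letin x K hK hM hN₁).congr ?_ rfl rfl, hN₂, by linarith⟩
  funext y
  by_cases hy : y = x
  · subst hy
    have hΘ : (K.map fun k => scaleL k.1 (k.2.2.1 y)).flatten = [] := by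
      simp only [List.flatten_eq_nil_iff, List.forall_mem_map]
      intro k hk
      simp [(hK k hk).1, scaleL]
    simp [ctxUnion, hΘ]
  · simp [ctxUnion, hy]

theorem letin (hW : W.Closed) (hzx : z ≠ x) (hK : ∀ k ∈ K, k.2.2.1 z = [] ∧ 0 < k.1 ∧ k.1 ≤ 1)
    (hM : ∀ k ∈ K, AntiSubst x W (Function.update k.2.2.1 z k.2.1) k.2.2.2.1 M (.dist k.2.2.2.2))
    (hN : AntiSubst x W Γ v N (.dist (K.map fun k => (k.1, k.2.1)))) :
    AntiSubst x W (ctxUnion Γ (fun y => (K.map fun k => scaleL k.1 (k.2.2.1 y)).flatten))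
      ((K.map fun k => k.1 * k.2.2.2.1).sum + v + 1) (.letin z N M)
      (.dist (K.map fun k => scaleL k.1 k.2.2.2.2).flatten) := by
  obtain ⟨A, v₁, v₂, hN₁, hN₂, hv⟩ := hN
  choose! C u₁ u₂ hM₁ hM₂ hu using hM
  let K' := K.map fun k => (k.1, k.2.1, Function.update k.2.2.1 x (C k), u₁ k, k.2.2.2.2)
  refine ⟨A ++ (K.map fun k => scaleL k.1 (C k)).flatten, (K.map fun k => k.1 * u₁ k).sum + v₁ + 1,
    v₂ + (K.map fun k => k.1 * u₂ k).sum, (GDeriv.letin z K' ?_ ?_ (hN₁.congr rfl rfl ?_)).congr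
      ?_ ?_ ?_, .inter_append hW hN₂ (.inter_flatten hW K _ _ _ (fun k hk => (hK k hk).2) hM₂),
    by linarith [sum_map_mul_add_sum_map_mul (q := Prod.fst) K hu]⟩
  · simp only [K', List.forall_mem_map]
    intro k hk
    simpa [Function.update_of_ne hzx] using hK k hk
  · simp only [K', List.forall_mem_map]
    intro k hk
    exact (hM₁ k hk).congr (Function.update_comm hzx _ _ _) rfl rfl
  · simp [K', Function.comp_def]
  · funext y
    by_cases hy : y = x <;> simp [K', ctxUnion, hy, Function.comp_def]
  · simp [K', Function.comp_def]
  · simp [K', Function.comp_def]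

theorem bang (hW : W.Closed) (I : List (ℚ × Ctx × ℚ × ATy)) (hI : ∀ k ∈ I, 0 < k.1 ∧ k.1 ≤ 1)
    (hD : ∀ k ∈ I, AntiSubst x W k.2.1 k.2.2.1 (.val V) (.arrow k.2.2.2)) :
    AntiSubst x W (fun y => (I.map fun k => scaleL k.1 (k.2.1 y)).flatten)
      ((I.map fun k => k.1 * k.2.2.1).sum) (.val V) (.inter (I.map fun k => (k.1, k.2.2.2))) := by
  choose! C u₁ u₂ hD₁ hD₂ hu using hD
  let I' := I.map fun k => (k.1, Function.update k.2.1 x (C k), u₁ k, k.2.2.2)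
  refine ⟨(I.map fun k => scaleL k.1 (C k)).flatten, (I.map fun k => k.1 * u₁ k).sum,
    (I.map fun k => k.1 * u₂ k).sum, (GDeriv.bang I' ?_ ?_).congr ?_ ?_ ?_,
    .inter_flatten hW I _ _ _ hI hD₂, sum_map_mul_add_sum_map_mul I hu⟩
  · exact List.forall_mem_map.mpr hI
  · exact List.forall_mem_map.mpr hD₁
  · funext y
    by_cases hy : y = x <;> simp [I', hy, Function.comp_def]
  · simp [I', Function.comp_def]
  · simp [I', Function.comp_def]

end AntiSubst

theorem substT_eq_val {N : Tm} {x : ℕ} {W V : Val} (h : substT N x W = .val V) :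
    ∃ Nv, N = .val Nv ∧ substV Nv x W = V := by
  cases N <;> simp_all [substT]

theorem substV_eq_cases {Nv V W : Val} {x : ℕ} (h : substV Nv x W = V) :
    Nv = .var x ∨ Nv = V ∨ ∃ z B, z ≠ x ∧ Nv = .lam z B ∧ V = .lam z (substT B x W) := by
  cases Nv with
  | var y => by_cases hy : y = x <;> simp_all [substV]
  | lam z B => by_cases hz : z = x <;> simp_all [substV]

theorem GDeriv.antiSubst {x : ℕ} {W : Val} (hW : W.Closed) {Γ : Ctx} {w : ℚ} {M : Tm} {τ : Ty}
    (h : GDeriv Γ w M τ) (N : Tm) (hN : substT N x W = M) (hx : Γ x = [])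
    (hτ : ∀ A, τ = .arrow A → N ≠ .val (.var x)) : AntiSubst x W Γ w N τ := by
  -- At arrow types `N` cannot be `x`: variables only receive intersection types.
  induction h generalizing N with
  | var y A =>
    obtain ⟨Nv, rfl, hv⟩ := substT_eq_val hN
    rcases substV_eq_cases hv with rfl | rfl | ⟨z, B, -, -, h⟩
    · simp only [substV, if_true] at hv
      simp [hv, Val.Closed, fvV] at hW
    · exact .of_gderiv hx (.var y A)
    · cases h
  | zero => exact .of_gderiv hx (.zero N)
  | lam z b hB ih =>
    obtain ⟨Nv, rfl, hv⟩ := substT_eq_val hN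
    rcases substV_eq_cases hv with rfl | rfl | ⟨z', B, hzx, rfl, h⟩
    · exact absurd rfl (hτ _ rfl)
    · exact .of_gderiv hx (.lam z b hB)
    · obtain ⟨rfl, rfl⟩ := Val.lam.inj h
      refine .lam hzx (ih B rfl ?_ (by simp))
      simpa [Function.update_of_ne hzx.symm] using hx
  | app _ _ ihV ihU =>
    cases N <;> simp [substT] at hN
    obtain ⟨rfl, rfl⟩ := hN
    simp only [ctxUnion, List.append_eq_nil_iff] at hx
    exact .app hW (ihV _ rfl hx.1 (by simp)) (ihU _ rfl hx.2 (by simp))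
  | choice _ _ ihM ihN =>
    cases N <;> simp [substT] at hN
    obtain ⟨rfl, rfl⟩ := hN
    simp only [ctxUnion, List.append_eq_nil_iff, scaleL_eq_nil_iff] at hx
    exact .choice hW (ihM _ rfl hx.1 (by simp)) (ihN _ rfl hx.2 (by simp))
  | letin z₀ K hK hM _ ihM ihN =>
    obtain ⟨z, N₀, M₀, rfl⟩ : ∃ z N₀ M₀, N = .letin z N₀ M₀ := by cases N <;> simp_all [substT]
    simp only [substT, Tm.letin.injEq] at hN
    obtain ⟨rfl, rfl, hM₀⟩ := hN
    simp only [ctxUnion, List.append_eq_nil_iff, List.flatten_eq_nil_iff, List.forall_mem_map,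
      scaleL_eq_nil_iff] at hx
    by_cases hzx : z = x
    · subst hzx
      simp only [if_true] at hM₀
      subst hM₀
      exact .letin_self K hK hM (ihN _ rfl hx.1 (by simp))
    · simp only [hzx, if_false] at hM₀
      refine .letin K hW hzx hK (fun k hk => ihM k hk _ hM₀ ?_ (by simp)) (ihN _ rfl hx.1 (by simp))
      simpa [Function.update_of_ne (Ne.symm hzx)] using hx.2 k hk
  | tval _ ih =>
    obtain ⟨Nv, rfl, hv⟩ := substT_eq_val hN
    exact (ih _ (by simp [substT, hv]) hx (by simp)).tval
  | bang I hI hD ih =>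
    obtain ⟨Nv, rfl, hv⟩ := substT_eq_val hN
    have hxI : ∀ k ∈ I, k.2.1 x = [] := by
      simpa only [List.flatten_eq_nil_iff, List.forall_mem_map, scaleL_eq_nil_iff] using hx
    rcases substV_eq_cases hv with rfl | rfl | ⟨z, B, hzx, rfl, rfl⟩
    · simp only [substV, if_true] at hv
      exact .var_self hW (hv ▸ GDeriv.bang I hI hD) (by simp)
    · exact .of_gderiv hx (.bang I hI hD)
    · exact .bang hW I hI fun k hk => ih k hk _ (by simp [substT, substV, hzx]) (hxI k hk) (by simp)

namespace GDeriv

variable {z : ℕ} {w : ℚ} {a : DTy} {M N : Tm}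

theorem beta {B : Tm} {U : Val} (hU : U.Closed) (h : GDeriv emptyCtx w (substT B z U) (.dist a)) :
    GDeriv emptyCtx (w + 1) (.app (.lam z B) U) (.dist a) := by
  obtain ⟨A, w₁, w₂, hB, hU', hw⟩ := h.antiSubst hU B rfl rfl (by simp)
  have hlam : GDeriv emptyCtx (w₁ + 1) (.val (.lam z B)) (.arrow (.arr A a)) :=
    (GDeriv.lam z a hB).congr (by simp [emptyCtx]) rfl (by simp)
  have hbang := GDeriv.bang [(1, emptyCtx, w₁ + 1, .arr A a)] (by simp) (by simpa using hlam)
  exact (GDeriv.app hbang hU').congr (funext fun _ => rfl) (by simp; linarith) rfl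

theorem letin_val {V : Val} (hV : V.Closed) (h : GDeriv emptyCtx w (substT M z V) (.dist a)) :
    GDeriv emptyCtx (w + 1) (.letin z (.val V) M) (.dist a) := by
  obtain ⟨A, w₁, w₂, hM, hV', hw⟩ := h.antiSubst hV M rfl rfl (by simp)
  exact (GDeriv.letin z [(1, A, emptyCtx, w₁, a)] (by simp [emptyCtx]) (by simpa using hM)
    hV'.tval).congr (funext fun _ => rfl) (by simp; linarith) (by simp [scaleL])

theorem letin_inv (h : GDeriv emptyCtx w (.letin z N M) (.dist a)) :
    ∃ (K : List (ℚ × ITy × Ctx × ℚ × DTy)) (v : ℚ),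
      (∀ k ∈ K, k.2.2.1 = emptyCtx ∧ 0 < k.1 ∧ k.1 ≤ 1) ∧
      (∀ k ∈ K, GDeriv (Function.update emptyCtx z k.2.1) k.2.2.2.1 M (.dist k.2.2.2.2)) ∧
      GDeriv emptyCtx v N (.dist (K.map fun k => (k.1, k.2.1))) ∧
      a = (K.map fun k => scaleL k.1 k.2.2.2.2).flatten ∧
      w ≤ (K.map fun k => k.1 * k.2.2.2.1).sum + v + 1 := by
  obtain ⟨Γ, hΓ, h⟩ : ∃ Γ, emptyCtx = Γ ∧ GDeriv Γ w (.letin z N M) (.dist a) := ⟨_, rfl, h⟩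
  cases h with
  | zero => exact ⟨[], 0, by simp, by simp, .zero N, rfl, by norm_num⟩
  | letin _ K hK hM hN =>
    have hnil : ∀ y, _ := fun y => List.append_eq_nil_iff.mp (congrFun hΓ y).symm
    simp only [List.flatten_eq_nil_iff, List.forall_mem_map, scaleL_eq_nil_iff] at hnil
    have hΔ : ∀ k ∈ K, k.2.2.1 = emptyCtx := fun k hk => funext fun y => (hnil y).2 k hk
    refine ⟨K, _, fun k hk => ⟨hΔ k hk, (hK k hk).2⟩, fun k hk => ?_,
      hN.congr (funext fun y => (hnil y).1) rfl rfl, rfl, le_rfl⟩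
    simpa [hΔ k hk] using hM k hk

theorem letin_bind {v : ℚ} {ι : Type} (P : List ι) (q : ι → ℚ)
    (hq : ∀ i ∈ P, 0 < q i ∧ q i ≤ 1) (K : ι → List (ℚ × ITy × Ctx × ℚ × DTy))
    (hK : ∀ i ∈ P, ∀ k ∈ K i, k.2.2.1 = emptyCtx ∧ 0 < k.1 ∧ k.1 ≤ 1)
    (hM : ∀ i ∈ P, ∀ k ∈ K i,
      GDeriv (Function.update emptyCtx z k.2.1) k.2.2.2.1 M (.dist k.2.2.2.2))
    (hN : GDeriv emptyCtx v N
      (.dist (P.map fun i => scaleL (q i) ((K i).map fun k => (k.1, k.2.1))).flatten)) :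
    GDeriv emptyCtx ((P.map fun i => q i * ((K i).map fun k => k.1 * k.2.2.2.1).sum).sum + v + 1)
      (.letin z N M)
      (.dist (P.map fun i =>
        scaleL (q i) ((K i).map fun k => scaleL k.1 k.2.2.2.2).flatten).flatten) := by
  let K' := (P.map fun i => (K i).map fun k => (q i * k.1, k.2)).flatten
  have mem_K' : ∀ k' ∈ K', ∃ i ∈ P, ∃ k ∈ K i, k' = (q i * k.1, k.2) := by
    intro k' hk'
    obtain ⟨l, hl, hk'l⟩ := List.mem_flatten.mp hk'
    obtain ⟨i, hi, rfl⟩ := List.mem_map.mp hl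
    obtain ⟨k, hk, rfl⟩ := List.mem_map.mp hk'l
    exact ⟨i, hi, k, hk, rfl⟩
  refine (letin z K' ?_ ?_ (hN.congr rfl rfl ?_)).congr ?_ ?_ ?_
  · intro k' hk'
    obtain ⟨i, hi, k, hk, rfl⟩ := mem_K' k' hk'
    obtain ⟨hΔ, hk0, hk1⟩ := hK i hi k hk
    obtain ⟨hi0, hi1⟩ := hq i hi
    exact ⟨by simp [hΔ, emptyCtx], mul_pos hi0 hk0, by nlinarith⟩
  · intro k' hk'
    obtain ⟨i, hi, k, hk, rfl⟩ := mem_K' k' hk'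
    simpa [(hK i hi k hk).1] using hM i hi k hk
  · simp [K', List.map_flatten, scaleL, Function.comp_def]
  · funext y
    show [] ++ _ = []
    simp only [List.nil_append, List.flatten_eq_nil_iff, List.forall_mem_map, scaleL_eq_nil_iff]
    intro k' hk'
    obtain ⟨i, hi, k, hk, rfl⟩ := mem_K' k' hk'
    simp [(hK i hi k hk).1, emptyCtx]
  · simp [K', List.map_flatten, List.sum_flatten, Function.comp_def, ← List.sum_map_mul_left,
      mul_assoc]
  · simp [K', List.map_flatten, List.flatten_flatten, scaleL_flatten, scaleL_scaleL,
      Function.comp_def]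

end GDeriv

/-- Weighted subject expansion along the reduction step `N → [pᵢ Nᵢ]` given by `stepL N`. -/
def SubjectExpansion (N : Tm) : Prop :=
  ∀ (w : ℚ × Tm → ℚ) (a : ℚ × Tm → DTy),
    (∀ p ∈ stepL N, GDeriv emptyCtx (w p) p.2 (.dist (a p))) →
    ∃ w', GDeriv emptyCtx w' N (.dist ((stepL N).map fun p => scaleL p.1 (a p)).flatten) ∧
      ((stepL N).map fun p => p.1 * w p).sum + 1 ≤ w'

theorem subjectExpansion_letin {z : ℕ} {N : Tm} (M : Tm) (hN : N.isVal = false)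
    (ih : SubjectExpansion N) : SubjectExpansion (.letin z N M) := by
  intro w a h
  rw [stepL_letin M hN] at h ⊢
  simp only [List.forall_mem_map, List.map_map, Function.comp_def] at h ⊢
  choose! K v hK hM hNK ha hw using fun p hp => (h p hp).letin_inv
  obtain ⟨v', hv', hv'w⟩ := ih v (fun p => (K p).map fun k => (k.1, k.2.1)) hNK
  have ha' : (stepL N).map (fun p => scaleL p.1 (a (p.1, .letin z p.2 M)))
      = (stepL N).map (fun p => scaleL p.1 ((K p).map fun k => scaleL k.1 k.2.2.2.2).flatten) :=
    List.map_congr_left fun p hp => by rw [ha p hp]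
  refine ⟨_, (GDeriv.letin_bind (stepL N) Prod.fst mem_stepL_prob K hK hM hv').congr rfl rfl
    (by rw [ha']), ?_⟩
  have hmono : ((stepL N).map fun p => p.1 * w (p.1, .letin z p.2 M)).sum
      ≤ ((stepL N).map fun p => p.1 * (((K p).map fun k => k.1 * k.2.2.2.1).sum + v p + 1)).sum :=
    List.sum_le_sum fun p hp => mul_le_mul_of_nonneg_left (hw p hp) (mem_stepL_prob p hp).1.le
  simp only [mul_add, mul_one, List.sum_map_add, sum_map_fst_stepL] at hmono
  linarith
theorem subjectExpansion : ∀ {N : Tm}, N.Closed → N.isVal = false → SubjectExpansion N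
  | .letin z N M, hC, _ => by
    rcases N.eq_val_or_isVal_eq_false with ⟨V, rfl⟩ | hN
    · intro w a h
      simp only [stepL, List.mem_singleton, forall_eq] at h
      refine ⟨w _ + 1, (GDeriv.letin_val hC.letin.1 h).congr rfl rfl ?_, by simp [stepL]⟩
      simp [stepL]
    · exact subjectExpansion_letin M hN (subjectExpansion hC.letin.1 hN)
  | .app (.lam z B) U, hC, _ => by
    intro w a h
    simp only [stepL, List.mem_singleton, forall_eq] at h
    have hU : U.Closed := (Finset.union_eq_empty.mp hC).2
    refine ⟨w _ + 1, (GDeriv.beta hU h).congr rfl rfl ?_, by simp [stepL]⟩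
    simp [stepL]
  | .choice M N, _, _ => by
    intro w a h
    simp only [stepL, List.mem_cons, List.not_mem_nil, or_false, forall_eq_or_imp, forall_eq] at h
    refine ⟨_, (GDeriv.choice h.1 h.2).congr (funext fun _ => rfl) rfl ?_, ?_⟩
    · simp [stepL]
    · simp only [stepL]
      norm_num
      linarith
  | .app (.var y) U, hC, _ => by simp [Tm.Closed, fvT, fvV] at hC
  | .val V, _, hv => by simp [Tm.isVal] at hv

theorem normD_scaleL (q : ℚ) (a : DTy) : normD (scaleL q a) = q * normD a := by
  simp [normD, scaleL, Function.comp_def, List.sum_map_mul_left]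

theorem normD_flatten (L : List DTy) : normD L.flatten = (L.map normD).sum := by
  simp [normD, List.map_flatten, List.sum_flatten, Function.comp_def]
  rfl

theorem exists_tight_gderiv_val (k : ℕ) (V : Val) :
    ∃ w a, Tight a ∧ GDeriv emptyCtx w (.val V) (.dist a) ∧ normD a = evalP k (.val V) ∧
      etime k (.val V) ≤ w :=
  ⟨0, [(1, [])], by simp [Tight], .tval (.inter_nil V), by simp [normD, evalP_val],
    by simp [etime_val]⟩

theorem exists_tight_gderiv (k : ℕ) {M : Tm} (hM : M.Closed) :
    ∃ w a, Tight a ∧ GDeriv emptyCtx w M (.dist a) ∧ normD a = evalP k M ∧ etime k M ≤ w := by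
  induction k generalizing M with
  | zero =>
    rcases M.eq_val_or_isVal_eq_false with ⟨V, rfl⟩ | hv
    · exact exists_tight_gderiv_val 0 V
    · exact ⟨0, [], by simp [Tight], .zero M, by simp [normD, evalP_zero hv], by simp [etime]⟩
  | succ k ih =>
    rcases M.eq_val_or_isVal_eq_false with ⟨V, rfl⟩ | hv
    · exact exists_tight_gderiv_val (k + 1) V
    choose! w a hT hD hn hw using fun p (hp : p ∈ stepL M) => ih (closed_of_mem_stepL hM p hp)
    obtain ⟨w', hD', hw'⟩ := subjectExpansion hM hv w a hD
    refine ⟨w', _, ?_, hD', ?_, ?_⟩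
    · simp only [Tight, List.mem_flatten, List.mem_map]
      rintro _ ⟨_, ⟨p, hp, rfl⟩, hmem⟩
      obtain ⟨q, hq, rfl⟩ := List.mem_map.mp hmem
      exact hT p hp q hq
    · rw [normD_flatten, evalP_succ, List.map_map]
      exact congrArg List.sum (List.map_congr_left fun p hp => by simp [normD_scaleL, hn p hp])
    · have hmono : ((stepL M).map fun p => p.1 * etime k p.2).sum
        ≤ ((stepL M).map fun p => p.1 * w p).sum :=
        List.sum_le_sum fun p hp => mul_le_mul_of_nonneg_left (hw p hp) (mem_stepL_prob p hp).1.le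
      rw [etime_succ k hv]
      linarith

/-- **Finitary Completeness**: for each `k` there is a tight derivation
`Π ⊳ ⊢_w M : 𝔞` with `‖𝔞‖ = eval_k(M)` and `w ≥ etime_k(M)`. -/
theorem finitary_completeness {M : Tm} (hM : M.Closed) (k : ℕ) :
    ∃ (w : ℚ) (a : DTy), Tight a ∧ Nonempty (Deriv emptyCtx w M (.dist a)) ∧
      normD a = evalP k M ∧ w ≥ etime k M := by
  obtain ⟨w, a, hT, hD, hn, hw⟩ := exists_tight_gderiv k hM
  exact ⟨w, a, hT, hD.nonempty_deriv, hn, hw⟩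

end CbV
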